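/- In the class-segregated buffer model with n queues of arbitrary capacities B_1,...,B_n, each assigned one of m nonnegative packet values v_1 < ... < v_m, the algorithm GREEDY (which accepts every arriving packet whose destination queue is not full, and at every send event transmits a packet from a non-empty queue of the highest value) is 2-competitive: for every input sequence σ, OPT(σ) ≤ 2 · GREEDY(σ), where OPT(σ) is the maximum benefit over all feasible diligent schedules for σ. -/

import Mathlib

/-!
Model of class-segregated buffer management (Al-Bawani, Souza).

A switch has `n` queues and `m` packet values `val : Fin m → ℝ`; queue `q` is
assigned value index `qval q` and has capacity `cap q`.  An input sequence is a
list of events: an `arrive q` event (a packet destined to queue `q`) or a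
`send` event.  A (diligent) schedule is given by its decisions at send events,
`dec : ℕ → Option (Fin n)` (decision for the `k`-th send event): acceptance is
forced (accept iff the destination queue is not full), at a send event the
schedule transmits one packet from the chosen non-empty queue, and it may
choose `none` only if all queues are empty.  `run` simulates the schedule,
tracking queue contents, the number of accepted packets of each value, and the
number of transmitted packets of each value.  `Feasible` expresses diligence,
and `GreedyFeasible` additionally requires that every transmitted packet has
the highest value among non-empty queues (ties broken arbitrarily).
`benefit` is the total value of transmitted packets.
-/

namespace BufferModel

inductive BEvent (n : ℕ) : Type where
  | arrive (q : Fin n) : BEvent n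
  | send : BEvent n
deriving DecidableEq

/-- `queue q` = number of packets currently in queue `q`; `acc i` = number of
packets of value index `i` accepted so far; `trans i` = number of packets of
value index `i` transmitted so far. -/
structure BState (n m : ℕ) where
  queue : Fin n → ℕ
  acc : Fin m → ℕ
  trans : Fin m → ℕ

def initState (n m : ℕ) : BState n m :=
  ⟨fun _ => 0, fun _ => 0, fun _ => 0⟩

/-- Diligent processing of an arrive event at queue `q`: accept iff there is room. -/
def arriveStep {n m : ℕ} (cap : Fin n → ℕ) (qval : Fin n → Fin m)
    (s : BState n m) (q : Fin n) : BState n m :=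
  if s.queue q < cap q then
    { queue := Function.update s.queue q (s.queue q + 1)
      acc := Function.update s.acc (qval q) (s.acc (qval q) + 1)
      trans := s.trans }
  else s

/-- Processing of a send event with decision `d`. -/
def sendStep {n m : ℕ} (qval : Fin n → Fin m) (s : BState n m)
    (d : Option (Fin n)) : BState n m :=
  match d with
  | some q =>
      if 0 < s.queue q then
        { queue := Function.update s.queue q (s.queue q - 1)
          acc := s.acc
          trans := Function.update s.trans (qval q) (s.trans (qval q) + 1) }
      else s
  | none => s

/-- Simulate the schedule with send-decisions `dec` on an event list, starting
with send-counter `k` and state `s`. -/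
def run {n m : ℕ} (cap : Fin n → ℕ) (qval : Fin n → Fin m)
    (dec : ℕ → Option (Fin n)) :
    List (BEvent n) → ℕ → BState n m → BState n m
  | [], _, s => s
  | BEvent.arrive q :: es, k, s => run cap qval dec es k (arriveStep cap qval s q)
  | BEvent.send :: es, k, s => run cap qval dec es (k + 1) (sendStep qval s (dec k))

/-- The schedule `dec` is feasible (diligent): at each send event it transmits
from a non-empty queue, and it stays idle only if all queues are empty. -/
def Feasible {n m : ℕ} (cap : Fin n → ℕ) (qval : Fin n → Fin m)
    (dec : ℕ → Option (Fin n)) :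
    List (BEvent n) → ℕ → BState n m → Prop
  | [], _, _ => True
  | BEvent.arrive q :: es, k, s => Feasible cap qval dec es k (arriveStep cap qval s q)
  | BEvent.send :: es, k, s =>
      (match dec k with
       | some q => 0 < s.queue q
       | none => ∀ q, s.queue q = 0) ∧
      Feasible cap qval dec es (k + 1) (sendStep qval s (dec k))

/-- The schedule `dec` is a GREEDY schedule: feasible, and at every send event
it transmits a packet from a non-empty queue of the highest value. -/
def GreedyFeasible {n m : ℕ} (val : Fin m → ℝ) (cap : Fin n → ℕ)
    (qval : Fin n → Fin m) (dec : ℕ → Option (Fin n)) :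
    List (BEvent n) → ℕ → BState n m → Prop
  | [], _, _ => True
  | BEvent.arrive q :: es, k, s =>
      GreedyFeasible val cap qval dec es k (arriveStep cap qval s q)
  | BEvent.send :: es, k, s =>
      (match dec k with
       | some q => 0 < s.queue q ∧
           ∀ q', 0 < s.queue q' → val (qval q') ≤ val (qval q)
       | none => ∀ q, s.queue q = 0) ∧
      GreedyFeasible val cap qval dec es (k + 1) (sendStep qval s (dec k))

/-- Benefit of a schedule: total value of the transmitted packets. -/
def benefit {n m : ℕ} (val : Fin m → ℝ) (s : BState n m) : ℝ :=
  ∑ i, val i * (s.trans i : ℝ)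

end BufferModel

/-!
Potential argument. Let `Φ` (`potential`) be the total value of the packets by which the
queues of an arbitrary diligent schedule `d` exceed those of GREEDY, queue by queue. Then
`benefit d + Φ ≤ 2 · benefit GREEDY` (`Dominated`) holds initially and is preserved by every event. An
arrival never increases `Φ`: when only `d` accepts, GREEDY's queue is full and so not shorter
than `d`'s. At a send event GREEDY gains `v'` and `Φ` grows by at most `v'`; if `d` sends a
packet of value `v`, either GREEDY's queue of that packet is non-empty, so `v ≤ v'` by
greediness, or it is empty, so `Φ` drops by `v`.
-/

section WeightedExcess

variable {ι : Type*} [Fintype ι]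

theorem Fintype.sum_sub_sum_eq_of_forall_ne {M : Type*} [AddCommGroup M] [DecidableEq ι]
    {f g : ι → M} (i : ι) (h : ∀ j, j ≠ i → f j = g j) :
    ∑ j, f j - ∑ j, g j = f i - g i := by
  rw [← Finset.sum_sub_distrib, Fintype.sum_eq_single i fun j hj => by rw [h j hj, sub_self]]

def weightedExcess (w : ι → ℝ) (a b : ι → ℕ) : ℝ :=
  ∑ i, w i * ((a i - b i : ℕ) : ℝ)

variable {w : ι → ℝ} {a b a' b' : ι → ℕ}

theorem weightedExcess_nonneg (hw : ∀ i, 0 ≤ w i) : 0 ≤ weightedExcess w a b :=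
  Finset.sum_nonneg fun i _ => mul_nonneg (hw i) (Nat.cast_nonneg _)

theorem weightedExcess_le_of_tsub_le (hw : ∀ i, 0 ≤ w i)
    (h : ∀ i, a' i - b' i ≤ a i - b i) : weightedExcess w a' b' ≤ weightedExcess w a b :=
  Finset.sum_le_sum fun i _ => mul_le_mul_of_nonneg_left (Nat.cast_le.mpr (h i)) (hw i)

variable [DecidableEq ι]

theorem weightedExcess_update_left_pred (i : ι) :
    weightedExcess w (Function.update a i (a i - 1)) b =
      weightedExcess w a b - if b i < a i then w i else 0 := by
  have hsub := Fintype.sum_sub_sum_eq_of_forall_ne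
    (f := fun j => w j * ((Function.update a i (a i - 1) j - b j : ℕ) : ℝ))
    (g := fun j => w j * ((a j - b j : ℕ) : ℝ)) i
    (fun j hj => by rw [Function.update_of_ne hj])
  simp only [Function.update_self] at hsub
  unfold weightedExcess
  split_ifs with hba
  · have : ((a i - 1 - b i : ℕ) : ℝ) = ((a i - b i : ℕ) : ℝ) - 1 := by
      rw [show a i - 1 - b i = a i - b i - 1 by omega, Nat.cast_sub (by omega), Nat.cast_one]
    rw [this] at hsub
    linarith
  · rw [show a i - 1 - b i = a i - b i by omega, sub_self] at hsub
    linarith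

theorem weightedExcess_update_right_pred_le (hw : ∀ i, 0 ≤ w i) (i : ι) :
    weightedExcess w a (Function.update b i (b i - 1)) ≤ weightedExcess w a b + w i := by
  have hsub := Fintype.sum_sub_sum_eq_of_forall_ne
    (f := fun j => w j * ((a j - Function.update b i (b i - 1) j : ℕ) : ℝ))
    (g := fun j => w j * ((a j - b j : ℕ) : ℝ)) i
    (fun j hj => by rw [Function.update_of_ne hj])
  simp only [Function.update_self] at hsub
  have hstep : ((a i - (b i - 1) : ℕ) : ℝ) ≤ ((a i - b i : ℕ) : ℝ) + 1 := by
    exact_mod_cast (show a i - (b i - 1) ≤ a i - b i + 1 by omega)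
  unfold weightedExcess
  nlinarith [hw i]

end WeightedExcess

namespace BufferModel

variable {n m : ℕ} (v : Fin m → ℝ) (cap : Fin n → ℕ) (qval : Fin n → Fin m)

def potential (sd sg : BState n m) : ℝ :=
  weightedExcess (fun q => v (qval q)) sd.queue sg.queue

def Dominated (sd sg : BState n m) : Prop :=
  benefit v sd + potential v qval sd sg ≤ 2 * benefit v sg

theorem benefit_arriveStep (s : BState n m) (q : Fin n) :
    benefit v (arriveStep cap qval s q) = benefit v s := by
  unfold arriveStep
  split <;> rfl

theorem arriveStep_queue_tsub_le (sd sg : BState n m) (q i : Fin n) :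
    (arriveStep cap qval sd q).queue i - (arriveStep cap qval sg q).queue i ≤
      sd.queue i - sg.queue i := by
  unfold arriveStep
  rcases eq_or_ne i q with rfl | hi
  · split_ifs <;> simp <;> omega
  · split_ifs <;> simp only [Function.update_of_ne hi, le_refl]

theorem sendStep_some_queue (s : BState n m) (q : Fin n) :
    (sendStep qval s (some q)).queue = Function.update s.queue q (s.queue q - 1) := by
  simp only [sendStep]
  split_ifs with hq
  · rfl
  · simp [Nat.eq_zero_of_not_pos hq]

theorem benefit_sendStep_some (s : BState n m) {q : Fin n} (hq : 0 < s.queue q) :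
    benefit v (sendStep qval s (some q)) = benefit v s + v (qval q) := by
  have hsub := Fintype.sum_sub_sum_eq_of_forall_ne
    (f := fun i => v i * ((Function.update s.trans (qval q) (s.trans (qval q) + 1) i : ℕ) : ℝ))
    (g := fun i => v i * (s.trans i : ℝ)) (qval q)
    (fun i hi => by rw [Function.update_of_ne hi])
  simp only [Function.update_self, Nat.cast_add, Nat.cast_one] at hsub
  simp only [benefit, sendStep, if_pos hq]
  linarith

theorem potential_sendStep_left (sd sg : BState n m) (q : Fin n) :
    potential v qval (sendStep qval sd (some q)) sg =
      potential v qval sd sg - if sg.queue q < sd.queue q then v (qval q) else 0 := by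
  rw [potential, sendStep_some_queue, weightedExcess_update_left_pred]
  rfl

theorem potential_sendStep_right_le (hv : ∀ i, 0 ≤ v i) (sd sg : BState n m) (q : Fin n) :
    potential v qval sd (sendStep qval sg (some q)) ≤ potential v qval sd sg + v (qval q) := by
  rw [potential, sendStep_some_queue]
  exact weightedExcess_update_right_pred_le (fun _ => hv _) q

variable {v cap qval}

theorem dominated_arriveStep (hv : ∀ i, 0 ≤ v i) {sd sg : BState n m}
    (h : Dominated v qval sd sg) (q : Fin n) :
    Dominated v qval (arriveStep cap qval sd q) (arriveStep cap qval sg q) := by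
  have hΦ : potential v qval (arriveStep cap qval sd q) (arriveStep cap qval sg q) ≤
      potential v qval sd sg :=
    weightedExcess_le_of_tsub_le (fun _ => hv _) (arriveStep_queue_tsub_le cap qval sd sg q)
  unfold Dominated at h ⊢
  rw [benefit_arriveStep, benefit_arriveStep]
  linarith

theorem dominated_sendStep (hv : ∀ i, 0 ≤ v i) {sd sg : BState n m}
    (h : Dominated v qval sd sg) {dd dg : Option (Fin n)}
    (hdd : match dd with
      | some q => 0 < sd.queue q
      | none => ∀ q, sd.queue q = 0)
    (hdg : match dg with
      | some q => 0 < sg.queue q ∧ ∀ q', 0 < sg.queue q' → v (qval q') ≤ v (qval q)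
      | none => ∀ q, sg.queue q = 0) :
    Dominated v qval (sendStep qval sd dd) (sendStep qval sg dg) := by
  unfold Dominated at h ⊢
  rcases dd with _ | q <;> rcases dg with _ | q'
  · exact h
  · obtain ⟨hq', -⟩ := hdg
    have hΦ := potential_sendStep_right_le v qval hv sd sg q'
    rw [show sendStep qval sd none = sd from rfl, benefit_sendStep_some v qval sg hq']
    linarith [hv (qval q')]
  · have hΦ := potential_sendStep_left v qval sd sg q
    rw [if_pos (by rw [hdg q]; exact hdd)] at hΦ
    rw [show sendStep qval sg none = sg from rfl, benefit_sendStep_some v qval sd hdd, hΦ]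
    linarith
  · obtain ⟨hq', hgreedy⟩ := hdg
    have hΦ := (potential_sendStep_right_le v qval hv _ sg q').trans_eq
      (congrArg (· + v (qval q')) (potential_sendStep_left v qval sd sg q))
    rw [benefit_sendStep_some v qval sd hdd, benefit_sendStep_some v qval sg hq']
    rcases Nat.eq_zero_or_pos (sg.queue q) with hempty | hnonempty
    · rw [if_pos (by rw [hempty]; exact hdd)] at hΦ
      linarith [hv (qval q')]
    · have hle := hgreedy q hnonempty
      split_ifs at hΦ <;> linarith [hv (qval q)]

theorem dominated_run (hv : ∀ i, 0 ≤ v i) {d g : ℕ → Option (Fin n)} (es : List (BEvent n))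
    {k : ℕ} {sd sg : BState n m} (hd : Feasible cap qval d es k sd)
    (hg : GreedyFeasible v cap qval g es k sg) (h : Dominated v qval sd sg) :
    Dominated v qval (run cap qval d es k sd) (run cap qval g es k sg) := by
  induction es generalizing k sd sg with
  | nil => exact h
  | cons e es ih =>
    cases e with
    | arrive q => exact ih hd hg (dominated_arriveStep hv h q)
    | send => exact ih hd.2 hg.2 (dominated_sendStep hv h hd.1 hg.1)

theorem dominated_initState : Dominated v qval (initState n m) (initState n m) := by
  simp [Dominated, benefit, potential, weightedExcess, initState]

theorem greedy_is_two_competitive_general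
    (n m : ℕ) (v : Fin m → ℝ) (hv : ∀ i, 0 ≤ v i)
    (cap : Fin n → ℕ) (qval : Fin n → Fin m)
    (σ : List (BEvent n)) (g d : ℕ → Option (Fin n))
    (hg : GreedyFeasible v cap qval g σ 0 (initState n m))
    (hd : Feasible cap qval d σ 0 (initState n m)) :
    benefit v (run cap qval d σ 0 (initState n m)) ≤
      2 * benefit v (run cap qval g σ 0 (initState n m)) := by
  have hdom := dominated_run hv σ hd hg dominated_initState
  have hΦ : 0 ≤ potential v qval (run cap qval d σ 0 (initState n m))
      (run cap qval g σ 0 (initState n m)) :=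
    weightedExcess_nonneg fun _ => hv _
  unfold Dominated at hdom
  linarith

/-- In the class-segregated buffer model with `n` queues of
arbitrary capacities, each assigned one of `m` nonnegative packet values
`v 0 < ... < v (m-1)`, GREEDY is 2-competitive: for every input sequence `σ`,
the benefit of any feasible diligent schedule `d` (in particular of an optimal
one) is at most twice the benefit of any GREEDY schedule `g`. -/
theorem greedy_is_two_competitive
    (n m : ℕ) (v : Fin m → ℝ) (hv : ∀ i, 0 ≤ v i) (hmono : StrictMono v)
    (cap : Fin n → ℕ) (qval : Fin n → Fin m)
    (σ : List (BEvent n)) (g d : ℕ → Option (Fin n))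
    (hg : GreedyFeasible v cap qval g σ 0 (initState n m))
    (hd : Feasible cap qval d σ 0 (initState n m)) :
    benefit v (run cap qval d σ 0 (initState n m)) ≤
      2 * benefit v (run cap qval g σ 0 (initState n m)) :=
  greedy_is_two_competitive_general n m v hv cap qval σ g d hg hd

end BufferModel
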